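/- Let 0 < λ < 1. Then there exist constants C, c > 0 such that for every k ≥ 1, P_λ({ω ∈ ℕ^ℕ : the tree encoded by ω has at least k vertices}) ≤ C e^{−ck}. -/

import Mathlib

/-!
A tree with at least `k` vertices has `ω₁ + ⋯ + ω_{k-1} ≥ k - 1`, and under `P_λ` this is a sum of
`k - 1` i.i.d. Poisson(λ) variables. Markov's inequality for `t ^ (ω₁ + ⋯ + ω_{k-1})`, whose mean is
`exp ((k - 1) λ (t - 1))`, with `t = 1 / λ` bounds its probability by
`(λ e^{1-λ})^{k-1} = e^{-c (k-1)}`, where `c = λ - 1 - log λ > 0` because `λ < 1`.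
-/

open MeasureTheory ProbabilityTheory Filter Topology

/-- `P` is the family of laws of a sequence of i.i.d. Poisson(λ) random variables:
for each `λ > 0`, `P λ` is a probability measure on `ℕ → ℕ` whose finite-dimensional
marginals are finite products of Poisson(λ) distributions.  This characterizes the
countable product of Poisson(λ) measures on `ℕ^ℕ`. -/
def IsPoissonSeedFamily (P : ℝ → Measure (ℕ → ℕ)) : Prop :=
  ∀ lam : ℝ, 0 < lam → IsProbabilityMeasure (P lam) ∧
    ∀ k : ℕ, (P lam).map (fun ω (j : Fin k) => ω j.1)
      = Measure.pi (fun _ : Fin k => poissonMeasure lam.toNNReal)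

/-- The first `k` coordinates `(ω₁, …, ω_k)` of a seed `ω ∈ ℕ^ℕ` (0-indexed). -/
def restrictSeed (k : ℕ) (ω : ℕ → ℕ) : Fin k → ℕ := fun j => ω j.1

/-- An event is `k`-tautologically determined if it is of the form
`{ω : (ω₁, …, ω_k) ∈ B}` for some `B ⊆ ℕ^k`. -/
def TautDetermined (k : ℕ) (A : Set (ℕ → ℕ)) : Prop :=
  ∃ B : Set (Fin k → ℕ), A = {ω | restrictSeed k ω ∈ B}

/-- The tree encoded by the seed `ω` in breadth-first order (node `i+1` has `ω i`
children) has at least `k` vertices: `ω₁ + ⋯ + ω_j ≥ j` for every `1 ≤ j ≤ k - 1`. -/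
def treeAtLeast (ω : ℕ → ℕ) (k : ℕ) : Prop :=
  ∀ j : ℕ, 1 ≤ j → j ≤ k - 1 → j ≤ ∑ i ∈ Finset.range j, ω i

/-- The 0-based index of the parent of the node of 0-based index `i` (for `i ≥ 1`):
the least `p` such that `ω₁ + ⋯ + ω_{p+1} ≥ i`. -/
noncomputable def parent (ω : ℕ → ℕ) (i : ℕ) : ℕ :=
  sInf {p : ℕ | i ≤ ∑ t ∈ Finset.range (p + 1), ω t}

/-- The level of the node of 0-based index `i`: the root (index `0`) has level `0`,
and the level of any other node is one plus the level of its parent. -/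
noncomputable def level (ω : ℕ → ℕ) (i : ℕ) : ℕ :=
  if h : parent ω i < i then level ω (parent ω i) + 1 else 0
termination_by i
decreasing_by exact h

open scoped NNReal ENNReal

lemma lintegral_pow_poissonMeasure (r t : ℝ≥0) :
    ∫⁻ m, (t : ℝ≥0∞) ^ m ∂poissonMeasure r = ENNReal.ofReal (Real.exp (r * (t - 1))) := by
  have hsum : HasSum (fun m : ℕ => (t : ℝ) ^ m * (Real.exp (-r) * r ^ m / m.factorial))
      (Real.exp (r * (t - 1))) := by
    have hexp := (NormedSpace.expSeries_div_hasSum_exp ((r : ℝ) * t)).mul_left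
      (Real.exp (-r))
    rw [← Real.exp_eq_exp_ℝ, ← Real.exp_add, neg_add_eq_sub, ← mul_sub_one] at hexp
    exact hexp.congr_fun fun m => by ring
  rw [lintegral_countable', ← hsum.tsum_eq, ENNReal.ofReal_tsum_of_nonneg (fun m => by positivity)
    hsum.summable]
  refine tsum_congr fun m => ?_
  rw [poissonMeasure_singleton, ENNReal.ofReal_mul (by positivity), ENNReal.ofReal_pow
    t.coe_nonneg, ENNReal.ofReal_coe_nnreal]

lemma lintegral_fintype_prod_eq_prod {ι : Type*} [Fintype ι] {E : ι → Type*}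
    [∀ i, MeasurableSpace (E i)] (μ : ∀ i, Measure (E i)) [∀ i, IsProbabilityMeasure (μ i)]
    {f : ∀ i, E i → ℝ≥0∞} (hf : ∀ i, Measurable (f i)) :
    ∫⁻ x, ∏ i, f i (x i) ∂Measure.pi μ = ∏ i, ∫⁻ y, f i y ∂μ i := by
  rw [lintegral_prod_eq_prod_lintegral_of_indepFun _ _
    (iIndepFun_pi fun i => (hf i).aemeasurable) fun i => (hf i).comp (measurable_pi_apply i)]
  exact Finset.prod_congr rfl fun i _ => (measurePreserving_eval μ i).lintegral_comp (hf i)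

lemma lintegral_pow_sum_pi_poissonMeasure (r t : ℝ≥0) (n : ℕ) :
    ∫⁻ v : Fin n → ℕ, (t : ℝ≥0∞) ^ (∑ j, v j) ∂(Measure.pi fun _ => poissonMeasure r)
      = ENNReal.ofReal (Real.exp (n * r * (t - 1))) := by
  simp_rw [← Finset.prod_pow_eq_pow_sum]
  rw [lintegral_fintype_prod_eq_prod _ fun _ => measurable_of_countable _]
  simp only [lintegral_pow_poissonMeasure, Finset.prod_const, Finset.card_univ, Fintype.card_fin,
    ← ENNReal.ofReal_pow (Real.exp_nonneg _), ← Real.exp_nat_mul, mul_assoc]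

lemma pi_poissonMeasure_sum_ge_le (r : ℝ≥0) {t : ℝ≥0} (ht : 1 ≤ t) (n a : ℕ) :
    Measure.pi (fun _ : Fin n => poissonMeasure r) {v | a ≤ ∑ j, v j}
      ≤ ENNReal.ofReal (Real.exp (n * r * (t - 1))) / (t : ℝ≥0∞) ^ a := by
  have ht' : (1 : ℝ≥0∞) ≤ t := by exact_mod_cast ht
  rw [ENNReal.le_div_iff_mul_le (Or.inl (pow_ne_zero _ (one_pos.trans_le ht').ne'))
    (Or.inl (ENNReal.pow_ne_top ENNReal.coe_ne_top)), mul_comm,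
    ← lintegral_pow_sum_pi_poissonMeasure]
  refine le_trans (mul_le_mul_right (measure_mono fun v hv => ?_) _)
    (mul_meas_ge_le_lintegral₀ (measurable_of_countable _).aemeasurable _)
  exact pow_le_pow_right₀ ht' hv

lemma pi_poissonMeasure_sum_ge_card_le {lam : ℝ} (h0 : 0 < lam) (h1 : lam ≤ 1) (n : ℕ) :
    Measure.pi (fun _ : Fin n => poissonMeasure lam.toNNReal) {v | n ≤ ∑ j, v j}
      ≤ ENNReal.ofReal (Real.exp (-(lam - 1 - Real.log lam) * n)) := by
  set t : ℝ≥0 := lam.toNNReal⁻¹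
  have hlam : ((lam.toNNReal : ℝ≥0) : ℝ) = lam := Real.coe_toNNReal _ h0.le
  have ht : (t : ℝ) = lam⁻¹ := by simp [t, hlam]
  refine (pi_poissonMeasure_sum_ge_le _ ((one_le_inv₀ (by simpa using h0)).2
    (Real.toNNReal_le_one.mpr h1)) n n).trans_eq ?_
  rw [← ENNReal.ofReal_coe_nnreal, ← ENNReal.ofReal_pow (NNReal.coe_nonneg _),
    ← ENNReal.ofReal_div_of_pos (by positivity), hlam, ht, inv_pow, div_inv_eq_mul,
    ← Real.exp_log (pow_pos h0 n), Real.log_pow, ← Real.exp_add]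
  congr 2
  field_simp
  ring

lemma treeAtLeast.sub_one_le_sum {ω : ℕ → ℕ} {k : ℕ} (h : treeAtLeast ω k) :
    k - 1 ≤ ∑ i ∈ Finset.range (k - 1), ω i := by
  rcases Nat.eq_zero_or_pos (k - 1) with hk | hk
  · simp [hk]
  · exact h _ hk le_rfl

lemma IsPoissonSeedFamily.measure_preimage_restrictSeed {P : ℝ → Measure (ℕ → ℕ)}
    (hP : IsPoissonSeedFamily P) {lam : ℝ} (hlam : 0 < lam) (n : ℕ) (B : Set (Fin n → ℕ)) :
    P lam (restrictSeed n ⁻¹' B) = Measure.pi (fun _ => poissonMeasure lam.toNNReal) B := by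
  rw [← (hP lam hlam).2 n, Measure.map_apply (measurable_pi_lambda _ fun j => measurable_pi_apply _)
    .of_discrete]
  rfl

/-- For `0 < λ < 1`, the probability that the tree encoded by the seed has at least `k`
vertices decays exponentially in `k`. -/
theorem subcritical_tree_size_tail
    (P : ℝ → Measure (ℕ → ℕ)) (hP : IsPoissonSeedFamily P)
    (lam : ℝ) (hlam0 : 0 < lam) (hlam1 : lam < 1) :
    ∃ C > (0 : ℝ), ∃ c > (0 : ℝ), ∀ k : ℕ, 1 ≤ k →
      P lam {ω | treeAtLeast ω k} ≤ ENNReal.ofReal (C * Real.exp (-c * k)) := by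
  set c := lam - 1 - Real.log lam
  have hc : 0 < c := by
    have := Real.log_lt_sub_one_of_pos hlam0 hlam1.ne
    linarith
  refine ⟨Real.exp c, Real.exp_pos c, c, hc, fun k hk => ?_⟩
  calc P lam {ω | treeAtLeast ω k}
      ≤ P lam (restrictSeed (k - 1) ⁻¹' {v | k - 1 ≤ ∑ j, v j}) := measure_mono fun ω hω => by
        simpa [restrictSeed, Fin.sum_univ_eq_sum_range (fun i => ω i)] using hω.sub_one_le_sum
    _ = Measure.pi (fun _ => poissonMeasure lam.toNNReal) {v | k - 1 ≤ ∑ j, v j} :=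
        hP.measure_preimage_restrictSeed hlam0 _ _
    _ ≤ ENNReal.ofReal (Real.exp (-c * (k - 1 : ℕ))) :=
        pi_poissonMeasure_sum_ge_card_le hlam0 hlam1.le _
    _ = ENNReal.ofReal (Real.exp c * Real.exp (-c * k)) := by
        rw [Nat.cast_sub hk, ← Real.exp_add]
        ring_nf
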